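/- Let A be an associative algebra over the field ℚ(v) (or over ℂ with v a fixed real number > 1). Suppose given families of elements x_k (k ∈ ℤ), y_t (t ∈ ℤ), and h_l (l ≥ 1) of A satisfying: [h_l, x_k] = −([l]/l)·x_{k+l} and [h_l, y_t] = ([2l]/l)·y_{t+l} for all l ≥ 1, k, t ∈ ℤ, where [m] = (v^m − v^{−m})/(v − v^{−1}). Define S(k_1, k_2; t) = Sym_{k_1,k_2}( x_{k_1}x_{k_2}y_t − [2]·x_{k_1}y_t x_{k_2} + y_t x_{k_1}x_{k_2} ), where Sym_{k_1,k_2} denotes symmetrization in the indices k_1, k_2. If S(0, 0; t) = 0 for all t ∈ ℤ, then S(k_1, k_2; t) = 0 for all k_1, k_2 ≥ 0 and all t ∈ ℤ. -/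

import Mathlib

/-!
Commutation with `h l` is a derivation that shifts every `x`-index by `l` (with factor `-[l]/l`)
and the `y`-index by `l` (with factor `[2l]/l`). Applied to a Serre expression that vanishes for
all `t`, it leaves `-[l]/l · (S(a+l, b; t) + S(a, b+l; t)) = 0`, and `[l] > 0` for `v > 1`.
From `(0, 0)` this gives `2 S(l, 0; t) = 0` by symmetry; shifting by `1` then propagates the
vanishing along each diagonal `S(n+m, n; ·)`, and these cover all nonnegative indices.
-/

/-- The quantum integer `[m] = (v^m - v^{-m})/(v - v⁻¹)`. -/
noncomputable def qint (v : ℝ) (m : ℤ) : ℝ := (v ^ m - v ^ (-m)) / (v - v⁻¹)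

section Propagation

variable {M : Type*} [AddCommGroup M] {F : ℤ → ℤ → M}
  (hshift : ∀ l : ℕ, 1 ≤ l → ∀ a b, F a b = 0 → F (a + l) b + F a (b + l) = 0)
include hshift

theorem apply_natCast_zero_eq_zero_of_shift [IsAddTorsionFree M] (hsymm : ∀ a b, F a b = F b a)
    (h00 : F 0 0 = 0) (m : ℕ) : F m 0 = 0 := by
  rcases Nat.eq_zero_or_pos m with rfl | hm
  · exact h00
  · have h := hshift m hm 0 0 h00
    rw [hsymm 0, ← two_nsmul] at h
    simpa using (smul_eq_zero.1 h).resolve_left two_ne_zero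

theorem apply_add_self_eq_zero_of_shift (hrow : ∀ m : ℕ, F m 0 = 0) (n m : ℕ) :
    F (n + m) n = 0 := by
  induction n generalizing m with
  | zero => simpa using hrow m
  | succ n ih =>
    have h := hshift 1 le_rfl _ _ (ih (m + 1))
    rwa [show (n : ℤ) + (m + 1 : ℕ) + (1 : ℕ) = n + (m + 2 : ℕ) by push_cast; ring, ih, zero_add,
      show (n : ℤ) + (m + 1 : ℕ) = (n + 1 : ℕ) + m by push_cast; ring, Nat.cast_one] at h

theorem eq_zero_of_shift [IsAddTorsionFree M] (hsymm : ∀ a b, F a b = F b a) (h00 : F 0 0 = 0)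
    {a b : ℤ} (ha : 0 ≤ a) (hb : 0 ≤ b) : F a b = 0 := by
  wlog hba : b ≤ a generalizing a b
  · rw [hsymm]; exact this hb ha (le_of_not_ge hba)
  obtain ⟨n, rfl⟩ := Int.eq_ofNat_of_zero_le hb
  obtain ⟨m, rfl⟩ := Int.le.dest hba
  exact apply_add_self_eq_zero_of_shift hshift
    (apply_natCast_zero_eq_zero_of_shift hshift hsymm h00) n m

end Propagation

section Serre

variable {R A : Type*} [CommRing R] [Ring A] [Algebra R A]

variable (R) in
def innerDerivation (h : A) : A →ₗ[R] A :=
  LinearMap.mulLeft R h - LinearMap.mulRight R h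

theorem innerDerivation_apply (h a : A) : innerDerivation R h a = h * a - a * h := rfl

theorem innerDerivation_mul (h a b : A) :
    innerDerivation R h (a * b) = innerDerivation R h a * b + a * innerDerivation R h b := by
  simp only [innerDerivation_apply]; noncomm_ring

def serre (q : R) (x y : ℤ → A) (k₁ k₂ t : ℤ) : A :=
  x k₁ * x k₂ * y t - q • (x k₁ * y t * x k₂) + y t * x k₁ * x k₂

def serreSym (q : R) (x y : ℤ → A) (k₁ k₂ t : ℤ) : A :=
  serre q x y k₁ k₂ t + serre q x y k₂ k₁ t

theorem serreSym_comm (q : R) (x y : ℤ → A) (k₁ k₂ : ℤ) :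
    serreSym q x y k₁ k₂ = serreSym q x y k₂ k₁ := by
  funext t; exact add_comm _ _

variable {D : A →ₗ[R] A} (hD : ∀ a b, D (a * b) = D a * b + a * D b) {x y : ℤ → A} {c d : R}
  {l : ℤ} (hx : ∀ k, D (x k) = c • x (k + l)) (hy : ∀ t, D (y t) = d • y (t + l))
include hD hx hy

theorem map_serre (q : R) (k₁ k₂ t : ℤ) :
    D (serre q x y k₁ k₂ t) = c • (serre q x y (k₁ + l) k₂ t + serre q x y k₁ (k₂ + l) t) +
      d • serre q x y k₁ k₂ (t + l) := by
  simp only [serre, map_add, map_sub, map_smul, hD, hx, hy, smul_mul_assoc, mul_smul_comm,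
    add_mul, smul_add, smul_sub]
  module

theorem map_serreSym (q : R) (k₁ k₂ t : ℤ) :
    D (serreSym q x y k₁ k₂ t) =
      c • (serreSym q x y (k₁ + l) k₂ t + serreSym q x y k₁ (k₂ + l) t) +
      d • serreSym q x y k₁ k₂ (t + l) := by
  simp only [serreSym, map_add, map_serre hD hx hy]
  module

end Serre

theorem serreSym_shift_eq_zero {K A : Type*} [Field K] [Ring A] [Algebra K A] {D : A →ₗ[K] A}
    (hD : ∀ a b, D (a * b) = D a * b + a * D b) {x y : ℤ → A} {c d : K} (hc : c ≠ 0) {l : ℤ}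
    (hx : ∀ k, D (x k) = c • x (k + l)) (hy : ∀ t, D (y t) = d • y (t + l)) {q : K} {a b : ℤ}
    (hab : serreSym q x y a b = 0) : serreSym q x y (a + l) b + serreSym q x y a (b + l) = 0 := by
  funext t
  have h := map_serreSym hD hx hy q a b t
  simp only [hab, Pi.zero_apply, map_zero, smul_zero, add_zero] at h
  exact (smul_eq_zero_iff_right hc).1 h.symm

theorem qint_pos {v : ℝ} (hv : 1 < v) {m : ℤ} (hm : 0 < m) : 0 < qint v m := by
  have hden : 0 < v - v⁻¹ := by linarith [inv_lt_one_of_one_lt₀ hv]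
  have hnum : v ^ (-m) < v ^ m := zpow_lt_zpow_right₀ hv (by omega)
  exact div_pos (by linarith) hden

theorem stmt_11 (A : Type*) [Ring A] [Algebra ℂ A] (v : ℝ) (hv : 1 < v)
    (x y : ℤ → A) (h : ℕ → A)
    (hx : ∀ l : ℕ, 1 ≤ l → ∀ k : ℤ,
      h l * x k - x k * h l = -((qint v l / l : ℝ) : ℂ) • x (k + l))
    (hy : ∀ l : ℕ, 1 ≤ l → ∀ t : ℤ,
      h l * y t - y t * h l = ((qint v (2 * l) / l : ℝ) : ℂ) • y (t + l))
    (S : ℤ → ℤ → ℤ → A)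
    (hS : ∀ k₁ k₂ t : ℤ, S k₁ k₂ t =
      (x k₁ * x k₂ * y t - ((qint v 2 : ℝ) : ℂ) • (x k₁ * y t * x k₂) + y t * x k₁ * x k₂) +
      (x k₂ * x k₁ * y t - ((qint v 2 : ℝ) : ℂ) • (x k₂ * y t * x k₁) + y t * x k₂ * x k₁))
    (hbase : ∀ t : ℤ, S 0 0 t = 0) :
    ∀ k₁ k₂ : ℤ, 0 ≤ k₁ → 0 ≤ k₂ → ∀ t : ℤ, S k₁ k₂ t = 0 := by
  obtain rfl : S = serreSym ((qint v 2 : ℝ) : ℂ) x y := funext₃ hS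
  have : IsAddTorsionFree (ℤ → A) := .of_isTorsionFree ℂ _
  have hshift (l : ℕ) (hl : 1 ≤ l) (a b : ℤ)
      (hab : serreSym ((qint v 2 : ℝ) : ℂ) x y a b = 0) :=
    serreSym_shift_eq_zero (innerDerivation_mul (h l)) (l := l)
      (neg_ne_zero.2 <| Complex.ofReal_ne_zero.2 <|
        (div_pos (qint_pos hv (by exact_mod_cast hl)) (by exact_mod_cast hl)).ne')
      (hx l hl) (hy l hl) hab
  intro k₁ k₂ hk₁ hk₂ t
  exact congrFun (eq_zero_of_shift hshift (serreSym_comm _ x y) (funext hbase) hk₁ hk₂) t
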